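/- Let Y1, Y0 be {0,1}-valued random variables with pr(Y1 = 1) > 0. Then max(0, (pr(Y1=1) - pr(Y0=1))/pr(Y1=1)) ≤ pr(Y0 = 0 | Y1 = 1) ≤ min(1, pr(Y0 = 0)/pr(Y1 = 1)), and both bounds are attained by some joint distribution with the given marginals. -/

import Mathlib

open MeasureTheory Finset

/-- Probability of an event as a real number. -/
noncomputable def pr {Ω : Type*} [MeasurableSpace Ω] (μ : Measure Ω) (s : Set Ω) : ℝ :=
  (μ s).toReal

/-!
Write `a = pr(Y1 = 1)`, `b = pr(Y0 = 1)`, `c = pr(Y0 = 0) = 1 - b` and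
`p = pr(Y0 = 0, Y1 = 1)`. The Fréchet bounds `max 0 (a + c - 1) ≤ p ≤ min a c` hold for any two
events, and since `a + c - 1 = a - b`, dividing by `a` gives the two inequalities. Conversely, a
2 × 2 table with row sums `(1 - a, a)` and column sums `(c, b)` is determined by its entry
`q 1 0 = t`, and all its entries are nonnegative exactly when `t` lies between the two Fréchet
bounds, so both endpoints are attained.
-/

section Frechet

variable {Ω : Type*} [MeasurableSpace Ω] (μ : Measure Ω)

lemma pr_eq_measureReal (s : Set Ω) : pr μ s = μ.real s := rfl

lemma pr_inter_le_min [IsFiniteMeasure μ] (s t : Set Ω) :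
    pr μ (s ∩ t) ≤ min (pr μ s) (pr μ t) :=
  le_min (measureReal_mono Set.inter_subset_left) (measureReal_mono Set.inter_subset_right)

lemma max_zero_pr_add_pr_sub_one_le_pr_inter [IsProbabilityMeasure μ] (s : Set Ω) {t : Set Ω}
    (ht : MeasurableSet t) : max 0 (pr μ s + pr μ t - 1) ≤ pr μ (s ∩ t) := by
  simp only [pr_eq_measureReal]
  have := measureReal_union_add_inter (μ := μ) (s := s) ht
  have := measureReal_le_one (μ := μ) (s := s ∪ t)
  exact max_le measureReal_nonneg (by linarith)

end Frechet

section BinaryVariable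

variable {Ω : Type*} [MeasurableSpace Ω] (μ : Measure Ω) {Y : Ω → ℕ}

lemma pr_eq_of_two_le (hY : ∀ ω, Y ω ≤ 1) {k : ℕ} (hk : 2 ≤ k) : pr μ {ω | Y ω = k} = 0 := by
  have : {ω | Y ω = k} = ∅ := Set.eq_empty_of_forall_notMem fun ω h ↦ by
    have := hY ω; simp only [Set.mem_ofPred_eq] at h; omega
  simp [pr, this]

lemma pr_eq_zero_add_pr_eq_one [IsProbabilityMeasure μ] (hYm : Measurable Y)
    (hY : ∀ ω, Y ω ≤ 1) : pr μ {ω | Y ω = 0} + pr μ {ω | Y ω = 1} = 1 := by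
  have hcompl : {ω | Y ω = 0} = {ω | Y ω = 1}ᶜ := by
    ext ω; have := hY ω; simp only [Set.mem_ofPred_eq, Set.mem_compl_iff]; omega
  have h1 : MeasurableSet {ω | Y ω = 1} := hYm (measurableSet_singleton 1)
  simp only [hcompl, pr_eq_measureReal, probReal_compl_eq_one_sub h1, sub_add_cancel]

end BinaryVariable

lemma exists_binary_coupling {f g : ℕ → ℝ} (hf : ∀ k, 2 ≤ k → f k = 0)
    (hg : ∀ l, 2 ≤ l → g l = 0) (hmass : f 0 + f 1 = g 0 + g 1) {t : ℝ}
    (hlo : max 0 (f 1 - g 1) ≤ t) (hhi : t ≤ min (f 1) (g 0)) :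
    ∃ q : ℕ → ℕ → ℝ, (∀ k l, 0 ≤ q k l) ∧ (∀ k, ∑ l ∈ range 2, q k l = f k) ∧
      (∀ l, ∑ k ∈ range 2, q k l = g l) ∧ q 1 0 = t := by
  obtain ⟨ht0, hfg⟩ := max_le_iff.mp hlo
  obtain ⟨htf, htg⟩ := le_min_iff.mp hhi
  let q : ℕ → ℕ → ℝ
    | 0, 0 => g 0 - t
    | 0, 1 => g 1 - f 1 + t
    | 1, 0 => t
    | 1, 1 => f 1 - t
    | _, _ => 0
  refine ⟨q, ?_, ?_, ?_, rfl⟩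
  · rintro (_ | _ | k) (_ | _ | l) <;> simp only [q] <;> linarith
  all_goals simp only [sum_range_succ, sum_range_zero, zero_add]
  · rintro (_ | _ | k)
    · simp only [q]; linarith
    · simp only [q]; ring
    · simp only [q, hf (k + 2) (by omega), add_zero]
  · rintro (_ | _ | l)
    · simp only [q]; ring
    · simp only [q]; ring
    · simp only [q, hg (l + 2) (by omega), add_zero]

/-- Tian–Pearl sharp bounds on the probability of causation for binary outcomes without
monotonicity, together with attainment of both bounds by couplings of the marginals. -/
theorem pc_binary_sharp_bounds {Ω : Type*} [MeasurableSpace Ω] (μ : Measure Ω)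
    [IsProbabilityMeasure μ] (Y1 Y0 : Ω → ℕ)
    (hY1m : Measurable Y1) (hY0m : Measurable Y0)
    (hY1 : ∀ ω, Y1 ω ≤ 1) (hY0 : ∀ ω, Y0 ω ≤ 1)
    (hpos : 0 < pr μ {ω | Y1 ω = 1}) :
    (max 0 ((pr μ {ω | Y1 ω = 1} - pr μ {ω | Y0 ω = 1}) / pr μ {ω | Y1 ω = 1})
        ≤ pr μ {ω | Y0 ω = 0 ∧ Y1 ω = 1} / pr μ {ω | Y1 ω = 1}) ∧
    (pr μ {ω | Y0 ω = 0 ∧ Y1 ω = 1} / pr μ {ω | Y1 ω = 1}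
        ≤ min 1 (pr μ {ω | Y0 ω = 0} / pr μ {ω | Y1 ω = 1})) ∧
    (∃ q : ℕ → ℕ → ℝ,
      (∀ k l, 0 ≤ q k l) ∧
      (∀ k, ∑ l ∈ Finset.range 2, q k l = pr μ {ω | Y1 ω = k}) ∧
      (∀ l, ∑ k ∈ Finset.range 2, q k l = pr μ {ω | Y0 ω = l}) ∧
      q 1 0 / pr μ {ω | Y1 ω = 1}
        = max 0 ((pr μ {ω | Y1 ω = 1} - pr μ {ω | Y0 ω = 1}) / pr μ {ω | Y1 ω = 1})) ∧
    (∃ q : ℕ → ℕ → ℝ,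
      (∀ k l, 0 ≤ q k l) ∧
      (∀ k, ∑ l ∈ Finset.range 2, q k l = pr μ {ω | Y1 ω = k}) ∧
      (∀ l, ∑ k ∈ Finset.range 2, q k l = pr μ {ω | Y0 ω = l}) ∧
      q 1 0 / pr μ {ω | Y1 ω = 1}
        = min 1 (pr μ {ω | Y0 ω = 0} / pr μ {ω | Y1 ω = 1})) := by
  set a := pr μ {ω | Y1 ω = 1}
  set b := pr μ {ω | Y0 ω = 1}
  set c := pr μ {ω | Y0 ω = 0}
  have hY1mass := pr_eq_zero_add_pr_eq_one μ hY1m hY1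
  have hY0mass : c + b = 1 := pr_eq_zero_add_pr_eq_one μ hY0m hY0
  have hlo : max 0 (a - b) ≤ pr μ {ω | Y0 ω = 0 ∧ Y1 ω = 1} := by
    have h1 : MeasurableSet {ω | Y1 ω = 1} := hY1m (measurableSet_singleton 1)
    have := max_zero_pr_add_pr_sub_one_le_pr_inter μ {ω | Y0 ω = 0} h1
    rwa [show c + a - 1 = a - b by linarith] at this
  have hhi : pr μ {ω | Y0 ω = 0 ∧ Y1 ω = 1} ≤ min a c :=
    (pr_inter_le_min μ _ _).trans_eq (min_comm _ _)
  have hlo_div : max 0 ((a - b) / a) = max 0 (a - b) / a := by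
    rw [← max_div_div_right hpos.le, zero_div]
  have hhi_div : min 1 (c / a) = min a c / a := by
    rw [← min_div_div_right hpos.le, div_self hpos.ne']
  have hY1bin : ∀ k, 2 ≤ k → pr μ {ω | Y1 ω = k} = 0 := fun _ ↦ pr_eq_of_two_le μ hY1
  have hY0bin : ∀ l, 2 ≤ l → pr μ {ω | Y0 ω = l} = 0 := fun _ ↦ pr_eq_of_two_le μ hY0
  have hmass := hY1mass.trans hY0mass.symm
  obtain ⟨qlo, hqlo0, hqlo_row, hqlo_col, hqlo⟩ :=
    exists_binary_coupling hY1bin hY0bin hmass le_rfl (hlo.trans hhi)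
  obtain ⟨qhi, hqhi0, hqhi_row, hqhi_col, hqhi⟩ :=
    exists_binary_coupling hY1bin hY0bin hmass (hlo.trans hhi) le_rfl
  rw [hlo_div, hhi_div]
  exact ⟨div_le_div_of_nonneg_right hlo hpos.le, div_le_div_of_nonneg_right hhi hpos.le,
    ⟨qlo, hqlo0, hqlo_row, hqlo_col, by rw [hqlo]⟩, ⟨qhi, hqhi0, hqhi_row, hqhi_col, by rw [hqhi]⟩⟩
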